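/- Let p ≡ 7 (mod 8) be prime and let C = {(r_Q·r_S, r_N·r_S) : S ⊆ 𝔽_p} ⊆ 𝔽₂^{2p} be the QQR code, and Q, N the binary quadratic residue codes {r_Q·r_S : S ⊆ 𝔽_p} and {r_N·r_S : S ⊆ 𝔽_p} of length p. Then C equals the even-weight subcode of the direct sum Q ⊕ N. -/

import Mathlib

open Classical in
/-- `r_T = ∑_{a ∈ T} x^a` in the group algebra `𝔽₂[x]/(x^p − 1) ≅ 𝔽₂[ℤ/pℤ]`. -/
noncomputable def rT (p : ℕ) (T : Finset (ZMod p)) :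
    AddMonoidAlgebra (ZMod 2) (ZMod p) :=
  ∑ a ∈ T, AddMonoidAlgebra.single a 1

open Classical in
/-- `r_Q`, for `Q` the set of nonzero quadratic residues mod `p`. -/
noncomputable def rQ (p : ℕ) [NeZero p] : AddMonoidAlgebra (ZMod 2) (ZMod p) :=
  rT p (Finset.univ.filter fun a => a ≠ 0 ∧ IsSquare a)

open Classical in
/-- `r_N`, for `N` the set of quadratic non-residues mod `p`. -/
noncomputable def rN (p : ℕ) [NeZero p] : AddMonoidAlgebra (ZMod 2) (ZMod p) :=
  rT p (Finset.univ.filter fun b => b ≠ 0 ∧ ¬ IsSquare b)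

/-- Hamming weight of a word, identified with an element of the group algebra. -/
def wt {p : ℕ} (u : AddMonoidAlgebra (ZMod 2) (ZMod p)) : ℕ := u.coeff.support.card

/-!
Write `e = r_Q`, `f = r_N`, `J = r_{𝔽_p}` (the all-ones word) and `ε : 𝔽₂[ℤ/p] → 𝔽₂` for the
augmentation, which reads off the parity of the weight. Squaring in characteristic 2 doubles
exponents, and multiplication by the square `2` permutes `Q` and `N`, so `e` and `f` are
idempotents; moreover `e + f = 1 + J`, and `|Q| = |N| = (p - 1)/2` is odd, so `ε e = ε f = 1`.
Hence `ε (e a) = ε a` and `ε (f b) = ε b`, giving one inclusion. Conversely `e f = J` and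
`J x = ε(x) J`, so when `ε a = ε b` the word `w = e a + f b + ε(a) J` has `e w = e a`, `f w = f b`.
-/

namespace QQR

open Finset AddMonoidAlgebra

theorem exists_mul_eq_and_mul_eq {R : Type*} [CommRing R] [Algebra (ZMod 2) R]
    (ε : R →ₐ[ZMod 2] ZMod 2) {e f J : R} (he : IsIdempotentElem e) (hf : IsIdempotentElem f)
    (hJ : ∀ x, J * x = ε x • J) (hsum : e + f = 1 + J) (hεe : ε e = 1) (hεf : ε f = 1)
    {a b : R} (hab : ε a = ε b) : ∃ w, e * w = e * a ∧ f * w = f * b := by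
  have two_eq_zero_R : (2 : R) = 0 := by
    simpa [map_ofNat] using congrArg (algebraMap (ZMod 2) R) (show (2 : ZMod 2) = 0 from rfl)
  set t := algebraMap (ZMod 2) R (ε a)
  have hJe : J * e = J := by rw [hJ, hεe, one_smul]
  have hJf : J * f = J := by rw [hJ, hεf, one_smul]
  have hJa : J * a = t * J := by rw [hJ, Algebra.smul_def]
  have hJb : J * b = t * J := by rw [hJ, Algebra.smul_def, ← hab]
  have hef : e * f = J := by linear_combination e * hsum - he.eq + hJe
  refine ⟨e * a + f * b + t * J, ?_, ?_⟩
  · linear_combination a * he.eq + b * hef + hJb + t * hJe + t * J * two_eq_zero_R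
  · linear_combination a * hef + b * hf.eq + hJa + t * hJf + t * J * two_eq_zero_R

variable {p : ℕ}

instance : CharP (AddMonoidAlgebra (ZMod 2) (ZMod p)) 2 :=
  charP_of_injective_algebraMap' (ZMod 2) 2

theorem rT_support (u : AddMonoidAlgebra (ZMod 2) (ZMod p)) : rT p u.coeff.support = u := by
  classical
  conv_rhs => rw [← sum_coeff_single u]
  refine Finset.sum_congr rfl fun a ha => ?_
  rw [(by decide : ∀ x : ZMod 2, x ≠ 0 → x = 1) _ (Finsupp.mem_support_iff.mp ha)]

noncomputable def augmentation (p : ℕ) : AddMonoidAlgebra (ZMod 2) (ZMod p) →ₐ[ZMod 2] ZMod 2 :=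
  lift (ZMod 2) (ZMod 2) (ZMod p) 1

@[simp]
theorem augmentation_single (a : ZMod p) (b : ZMod 2) : augmentation p (single a b) = b := by
  simp [augmentation, lift_single]

theorem augmentation_rT (T : Finset (ZMod p)) : augmentation p (rT p T) = #T := by
  simp [rT]

theorem augmentation_eq_wt (u : AddMonoidAlgebra (ZMod 2) (ZMod p)) :
    augmentation p u = wt u := by
  conv_lhs => rw [← rT_support u]
  exact augmentation_rT _

theorem even_wt_add_wt_iff (u v : AddMonoidAlgebra (ZMod 2) (ZMod p)) :
    Even (wt u + wt v) ↔ augmentation p u = augmentation p v := by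
  rw [← ZMod.natCast_eq_zero_iff_even, Nat.cast_add, ← augmentation_eq_wt, ← augmentation_eq_wt]
  generalize augmentation p u = x
  generalize augmentation p v = y
  decide +revert

theorem rT_univ_mul [NeZero p] (u : AddMonoidAlgebra (ZMod 2) (ZMod p)) :
    rT p univ * u = augmentation p u • rT p univ := by
  induction u using induction_linear with
  | zero => simp
  | add u v hu hv => rw [mul_add, hu, hv, map_add, add_smul]
  | single a b =>
    rw [augmentation_single, rT, Finset.sum_mul, Finset.smul_sum]
    refine Finset.sum_equiv (Equiv.addRight a) (by simp) fun g _ => ?_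
    rw [single_mul_single, one_mul, smul_single, smul_eq_mul, mul_one]
    rfl

theorem isIdempotentElem_rT {T : Finset (ZMod p)} (h2 : IsUnit (2 : ZMod p))
    (hT : ∀ a, 2 * a ∈ T ↔ a ∈ T) : IsIdempotentElem (rT p T) := by
  rw [IsIdempotentElem, ← sq, rT, sum_pow_char]
  refine Finset.sum_equiv h2.unit.mulLeft (fun a => ?_) fun a _ => ?_
  · simpa using (hT a).symm
  · simp [single_pow, two_mul]

theorem isSquare_mul_iff_of_isSquare {α : Type*} [CommGroupWithZero α] {c a : α}
    (hc : IsSquare c) (hc0 : c ≠ 0) : IsSquare (c * a) ↔ IsSquare a :=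
  ⟨fun h => by simpa [hc0] using (isSquare_inv.mpr hc).mul h, hc.mul⟩

theorem isSquare_mul_iff_of_not_isSquare {F : Type*} [Field F] [Fintype F] {c a : F}
    (hc : ¬IsSquare c) (ha : a ≠ 0) : IsSquare (c * a) ↔ ¬IsSquare a := by
  classical
  have hc0 : c ≠ 0 := by rintro rfl; exact hc IsSquare.zero
  rw [← quadraticChar_one_iff_isSquare (mul_ne_zero hc0 ha),
    ← quadraticChar_neg_one_iff_not_isSquare, map_mul,
    quadraticChar_neg_one_iff_not_isSquare.mpr hc, neg_one_mul, neg_eq_iff_eq_neg]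

section Residues

variable [NeZero p]

open Classical in
noncomputable def residues (p : ℕ) [NeZero p] : Finset (ZMod p) :=
  Finset.univ.filter fun a => a ≠ 0 ∧ IsSquare a

open Classical in
noncomputable def nonresidues (p : ℕ) [NeZero p] : Finset (ZMod p) :=
  Finset.univ.filter fun b => b ≠ 0 ∧ ¬ IsSquare b

theorem rQ_eq : rQ p = rT p (residues p) := rfl

theorem rN_eq : rN p = rT p (nonresidues p) := rfl

theorem disjoint_residues_nonresidues : Disjoint (residues p) (nonresidues p) := by
  simp +contextual [residues, nonresidues, Finset.disjoint_left]

theorem residues_union_nonresidues : residues p ∪ nonresidues p = univ.erase 0 := by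
  ext a
  simp only [residues, nonresidues, mem_union, mem_filter, mem_univ, true_and, mem_erase, and_true]
  tauto

theorem card_residues_eq_card_nonresidues [Fact p.Prime] (hp2 : p ≠ 2) :
    #(residues p) = #(nonresidues p) := by
  obtain ⟨c, hc⟩ := FiniteField.exists_nonsquare (F := ZMod p) (by rwa [ZMod.ringChar_zmod_n])
  have hc0 : c ≠ 0 := by rintro rfl; exact hc IsSquare.zero
  refine Finset.card_equiv (Equiv.mulLeft₀ c hc0) fun a => ?_
  by_cases ha : a = 0
  · simp [residues, nonresidues, ha]
  · simp [residues, nonresidues, ha, hc0, isSquare_mul_iff_of_not_isSquare hc ha]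

theorem two_mul_card_residues [Fact p.Prime] (hp2 : p ≠ 2) : 2 * #(residues p) = p - 1 := by
  conv_lhs => rw [two_mul]; arg 2; rw [card_residues_eq_card_nonresidues hp2]
  rw [← card_union_of_disjoint disjoint_residues_nonresidues, residues_union_nonresidues,
    card_erase_of_mem (mem_univ _), card_univ, ZMod.card]

theorem odd_card_residues [Fact p.Prime] (hp : p % 4 = 3) : Odd #(residues p) := by
  have := two_mul_card_residues (p := p) (by omega)
  rw [Nat.odd_iff]
  omega

theorem augmentation_rQ [Fact p.Prime] (hp : p % 4 = 3) : augmentation p (rQ p) = 1 := by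
  rw [rQ_eq, augmentation_rT, ZMod.natCast_eq_one_iff_odd]
  exact odd_card_residues hp

theorem augmentation_rN [Fact p.Prime] (hp : p % 4 = 3) : augmentation p (rN p) = 1 := by
  rw [rN_eq, augmentation_rT, ZMod.natCast_eq_one_iff_odd,
    ← card_residues_eq_card_nonresidues (by omega)]
  exact odd_card_residues hp

theorem rQ_add_rN : rQ p + rN p = 1 + rT p univ := by
  rw [rQ_eq, rN_eq, rT, rT, ← sum_union disjoint_residues_nonresidues, residues_union_nonresidues,
    rT, ← add_sum_erase univ _ (mem_univ 0), one_def, ← add_assoc, CharTwo.add_self_eq_zero,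
    zero_add]

theorem isIdempotentElem_rQ [Fact p.Prime] (h2 : IsSquare (2 : ZMod p))
    (h20 : (2 : ZMod p) ≠ 0) : IsIdempotentElem (rQ p) := by
  refine isIdempotentElem_rT (isUnit_iff_ne_zero.mpr h20) fun a => ?_
  simp [h20, isSquare_mul_iff_of_isSquare h2 h20]

theorem isIdempotentElem_rN [Fact p.Prime] (h2 : IsSquare (2 : ZMod p))
    (h20 : (2 : ZMod p) ≠ 0) : IsIdempotentElem (rN p) := by
  refine isIdempotentElem_rT (isUnit_iff_ne_zero.mpr h20) fun a => ?_
  simp [h20, isSquare_mul_iff_of_isSquare h2 h20]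

end Residues

end QQR

theorem stmt15 (p : ℕ) [Fact p.Prime] (hp : p % 8 = 7) :
    {c : AddMonoidAlgebra (ZMod 2) (ZMod p) × AddMonoidAlgebra (ZMod 2) (ZMod p) |
        ∃ S : Finset (ZMod p), c = (rQ p * rT p S, rN p * rT p S)} =
      {c : AddMonoidAlgebra (ZMod 2) (ZMod p) × AddMonoidAlgebra (ZMod 2) (ZMod p) |
        (∃ S₁ : Finset (ZMod p), c.1 = rQ p * rT p S₁) ∧
        (∃ S₂ : Finset (ZMod p), c.2 = rN p * rT p S₂) ∧
        Even (wt c.1 + wt c.2)} := by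
  open QQR in
  have hp2 : p ≠ 2 := by omega
  have hp4 : p % 4 = 3 := by omega
  have h2 : IsSquare (2 : ZMod p) := (ZMod.exists_sq_eq_two_iff hp2).mpr (Or.inr hp)
  have h20 : (2 : ZMod p) ≠ 0 := Ring.two_ne_zero (by rwa [ZMod.ringChar_zmod_n])
  have parity (S₁ S₂ : Finset (ZMod p)) :
      Even (wt (rQ p * rT p S₁) + wt (rN p * rT p S₂)) ↔
        augmentation p (rT p S₁) = augmentation p (rT p S₂) := by
    rw [even_wt_add_wt_iff, map_mul, map_mul, augmentation_rQ hp4, augmentation_rN hp4, one_mul,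
      one_mul]
  ext ⟨u, v⟩
  simp only [Set.mem_ofPred_eq, Prod.mk.injEq]
  constructor
  · rintro ⟨S, rfl, rfl⟩
    exact ⟨⟨S, rfl⟩, ⟨S, rfl⟩, (parity S S).mpr rfl⟩
  · rintro ⟨⟨S₁, rfl⟩, ⟨S₂, rfl⟩, heven⟩
    obtain ⟨w, hwQ, hwN⟩ := exists_mul_eq_and_mul_eq (augmentation p)
      (isIdempotentElem_rQ h2 h20) (isIdempotentElem_rN h2 h20) rT_univ_mul rQ_add_rN
      (augmentation_rQ hp4) (augmentation_rN hp4) ((parity S₁ S₂).mp heven)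
    exact ⟨w.coeff.support, by rw [rT_support, hwQ], by rw [rT_support, hwN]⟩
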